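/- Let M̄ be the subspace of d×d matrices Θ with col(Θ) ⊆ col(U^r) or col(Θᵀ) ⊆ col(V^r) (precisely, the subspace whose orthogonal complement is {Θ : col(Θ) ⊆ col(U^r)⊥, col(Θᵀ) ⊆ col(V^r)⊥}), where U^r, V^r each have r orthonormal columns. Then every Θ ∈ M̄ has rank at most 2r, and consequently the subspace compatibility φ(M̄) = sup_{Θ∈M̄\{0}} ‖Θ‖_*/‖Θ‖_F satisfies φ(M̄) ≤ √(2r). -/

import Mathlib

/-!
Write `P = Uʳ Uʳᵀ` and `Q = Vʳ Vʳᵀ` for the orthogonal projections onto `col(Uʳ)` and `col(Vʳ)`.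
The matrix `N = (1 - P) Θ (1 - Q)` is one of those `Θ` is orthogonal to, and since `1 - P`,
`1 - Q` are symmetric idempotents, `‖N‖_F² = tr(Nᵀ N) = tr(Θᵀ N) = 0`. Hence
`Θ = P Θ (1 - Q) + Θ Q = Uʳ (Uʳᵀ Θ (1 - Q)) + (Θ Vʳ) Vʳᵀ` is a sum of two matrices of rank `≤ r`.
The nuclear-norm bound is Cauchy–Schwarz on the square roots of the at most `rank Θ` nonzero
eigenvalues of `Θᵀ Θ`.
-/

/-- The square root of a positive semidefinite matrix (as in the older Mathlib's
`Matrix.PosSemidef.sqrt`, removed since). -/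
noncomputable def Matrix.PosSemidef.sqrt {n : Type*} [Fintype n] [DecidableEq n]
    {A : Matrix n n ℝ} (hA : A.PosSemidef) : Matrix n n ℝ :=
  (hA.1.eigenvectorUnitary : Matrix n n ℝ) * Matrix.diagonal (fun i => Real.sqrt (hA.1.eigenvalues i)) *
    (star hA.1.eigenvectorUnitary : Matrix n n ℝ)

/-- Nuclear norm: sum of singular values, i.e. the trace of `√(AᵀA)`. -/
noncomputable def nuclearNorm {m n : ℕ} (A : Matrix (Fin m) (Fin n) ℝ) : ℝ :=
  (Matrix.PosSemidef.sqrt (Matrix.posSemidef_conjTranspose_mul_self A)).trace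

/-- Frobenius norm: `√(trace(AᵀA))`. -/
noncomputable def frobNorm {m n : ℕ} (A : Matrix (Fin m) (Fin n) ℝ) : ℝ :=
  Real.sqrt (A.transpose * A).trace

open Matrix

namespace Matrix

variable {m n p q R : Type*}

theorem rank_add_le [Fintype n] [Field R] (A B : Matrix m n R) :
    (A + B).rank ≤ A.rank + B.rank := by
  rw [rank, rank, rank, mulVecLin_add]
  exact (Submodule.finrank_mono (LinearMap.range_add_le _ _)).trans
    (Submodule.finrank_add_le_finrank_add_finrank _ _)

theorem rank_mul_le_card_width [Fintype n] [Fintype p] [CommRing R] [StrongRankCondition R]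
    (A : Matrix m n R) (B : Matrix n p R) : (A * B).rank ≤ Fintype.card n :=
  (rank_mul_le_left A B).trans (rank_le_card_width A)

section Projection

variable [Fintype p] [CommRing R] {U : Matrix m p R}

theorem isIdempotentElem_mul_transpose_self [Fintype m] [DecidableEq p] (hU : Uᵀ * U = 1) :
    IsIdempotentElem (U * Uᵀ) := by
  rw [IsIdempotentElem, Matrix.mul_assoc, ← Matrix.mul_assoc Uᵀ, hU, Matrix.one_mul]

theorem transpose_mul_one_sub_mul_transpose_self [Fintype m] [DecidableEq m] [DecidableEq p]
    (hU : Uᵀ * U = 1) : Uᵀ * (1 - U * Uᵀ) = 0 := by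
  rw [Matrix.mul_sub, Matrix.mul_one, ← Matrix.mul_assoc, hU, Matrix.one_mul, sub_self]

theorem one_sub_mul_transpose_self_mul [Fintype m] [DecidableEq m] [DecidableEq p]
    (hU : Uᵀ * U = 1) : (1 - U * Uᵀ) * U = 0 := by
  rw [Matrix.sub_mul, Matrix.one_mul, Matrix.mul_assoc, hU, Matrix.mul_one, sub_self]

theorem transpose_one_sub_mul_transpose_self [DecidableEq m] : (1 - U * Uᵀ)ᵀ = 1 - U * Uᵀ := by
  rw [transpose_sub, transpose_one, transpose_mul, transpose_transpose]

end Projection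

theorem eq_zero_of_trace_transpose_mul_eq_zero [Fintype m] [Fintype n] {E : Matrix m m ℝ} {F : Matrix n n ℝ}
    (hE : IsIdempotentElem E) (hEt : Eᵀ = E) (hF : IsIdempotentElem F) (hFt : Fᵀ = F)
    (Θ : Matrix m n ℝ) (h : (Θᵀ * (E * Θ * F)).trace = 0) : E * Θ * F = 0 := by
  have hnorm : ((E * Θ * F)ᵀ * (E * Θ * F)).trace = (Θᵀ * (E * Θ * F)).trace := by
    calc ((E * Θ * F)ᵀ * (E * Θ * F)).trace
        = (F * (Θᵀ * (E * E) * Θ * F)).trace := by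
          simp only [transpose_mul, hEt, hFt, Matrix.mul_assoc]
      _ = (Θᵀ * (E * Θ * (F * F))).trace := by
          rw [trace_mul_comm, hE.eq]; simp only [Matrix.mul_assoc]
      _ = (Θᵀ * (E * Θ * F)).trace := by rw [hF.eq]
  rw [← trace_conjTranspose_mul_self_eq_zero_iff, conjTranspose_eq_transpose_of_trivial,
    hnorm, h]

theorem rank_le_of_forall_trace_transpose_mul_eq_zero [Fintype m] [Fintype n] [Fintype p]
    [Fintype q] [DecidableEq m] [DecidableEq n] [DecidableEq p] [DecidableEq q]
    {U : Matrix m p ℝ} {V : Matrix n q ℝ} (hU : Uᵀ * U = 1) (hV : Vᵀ * V = 1)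
    {Θ : Matrix m n ℝ} (hΘ : ∀ N : Matrix m n ℝ, Uᵀ * N = 0 → N * V = 0 → (Θᵀ * N).trace = 0) :
    Θ.rank ≤ Fintype.card p + Fintype.card q := by
  set P := U * Uᵀ
  set Q := V * Vᵀ
  have hN : (1 - P) * Θ * (1 - Q) = 0 :=
    eq_zero_of_trace_transpose_mul_eq_zero (isIdempotentElem_mul_transpose_self hU).one_sub
      transpose_one_sub_mul_transpose_self (isIdempotentElem_mul_transpose_self hV).one_sub
      transpose_one_sub_mul_transpose_self Θ <| hΘ _
        (by rw [Matrix.mul_assoc, ← Matrix.mul_assoc Uᵀ,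
          transpose_mul_one_sub_mul_transpose_self hU, Matrix.zero_mul])
        (by rw [Matrix.mul_assoc, one_sub_mul_transpose_self_mul hV, Matrix.mul_zero])
  have hrange : Θ * (1 - Q) = P * Θ * (1 - Q) := by
    rw [← sub_eq_zero, ← hN]; simp only [Matrix.sub_mul, Matrix.one_mul]
  have hdecomp : Θ = U * (Uᵀ * Θ * (1 - Q)) + Θ * V * Vᵀ :=
    calc Θ = Θ * (1 - Q) + Θ * Q := by rw [Matrix.mul_sub, Matrix.mul_one, sub_add_cancel]
      _ = U * (Uᵀ * Θ * (1 - Q)) + Θ * V * Vᵀ := by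
        rw [hrange]; simp only [P, Q, Matrix.mul_assoc]
  rw [hdecomp]
  exact (rank_add_le _ _).trans <|
    add_le_add (rank_mul_le_card_width _ _) (rank_mul_le_card_width _ _)

theorem PosSemidef.trace_sqrt [Fintype n] [DecidableEq n] {A : Matrix n n ℝ} (hA : A.PosSemidef) :
    hA.sqrt.trace = ∑ i, √(hA.1.eigenvalues i) := by
  rw [PosSemidef.sqrt, trace_mul_cycle,
    (mem_unitaryGroup_iff').mp hA.1.eigenvectorUnitary.2, Matrix.one_mul, trace_diagonal]

end Matrix

theorem Real.sum_sqrt_le_sqrt_card_ne_zero_mul_sqrt_sum {ι : Type*} [Fintype ι] {f : ι → ℝ}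
    (hf : ∀ i, 0 ≤ f i) :
    ∑ i, √(f i) ≤ √(Fintype.card {i // f i ≠ 0}) * √(∑ i, f i) := by
  classical
  let χ : ι → ℝ := fun i => if f i = 0 then 0 else 1
  have hχ : ∑ i, χ i = Fintype.card {i // f i ≠ 0} := by
    simp [χ, Fintype.card_subtype, Finset.sum_ite]
  calc ∑ i, √(f i) = ∑ i, √(χ i) * √(f i) := by
        refine Finset.sum_congr rfl fun i _ => ?_
        by_cases hi : f i = 0 <;> simp [χ, hi]
    _ ≤ √(Fintype.card {i // f i ≠ 0}) * √(∑ i, f i) := by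
        rw [← hχ]
        exact Real.sum_sqrt_mul_sqrt_le _ (fun i => by positivity) hf

theorem nuclearNorm_le_sqrt_rank_mul_frobNorm {m n : ℕ} (A : Matrix (Fin m) (Fin n) ℝ) :
    nuclearNorm A ≤ √(A.rank) * frobNorm A := by
  have hA := posSemidef_conjTranspose_mul_self A
  have hnuc : nuclearNorm A = ∑ i, √(hA.1.eigenvalues i) := hA.trace_sqrt
  have hfrob : frobNorm A = √(∑ i, hA.1.eigenvalues i) := by
    rw [frobNorm, ← conjTranspose_eq_transpose_of_trivial, hA.1.trace_eq_sum_eigenvalues]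
    rfl
  have hrank : A.rank = Fintype.card {i // hA.1.eigenvalues i ≠ 0} := by
    rw [← rank_conjTranspose_mul_self, hA.1.rank_eq_card_non_zero_eigs]
  rw [hnuc, hfrob, hrank]
  exact Real.sum_sqrt_le_sqrt_card_ne_zero_mul_sqrt_sum hA.eigenvalues_nonneg

/-- Any matrix `Θ` in the subspace `M̄`, i.e. in the orthogonal complement (w.r.t. the trace
inner product) of `{N : col(N) ⊆ col(Uʳ)ᗮ, col(Nᵀ) ⊆ col(Vʳ)ᗮ}`, has rank at most `2r`, and
hence `‖Θ‖_* ≤ √(2r) ‖Θ‖_F`. -/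
theorem mem_Mbar_rank_and_compatibility {d r : ℕ}
    (Ur Vr : Matrix (Fin d) (Fin r) ℝ)
    (hU : Ur.transpose * Ur = 1) (hV : Vr.transpose * Vr = 1)
    (Θ : Matrix (Fin d) (Fin d) ℝ)
    (hΘ : ∀ N : Matrix (Fin d) (Fin d) ℝ,
      Ur.transpose * N = 0 → N * Vr = 0 → (Θ.transpose * N).trace = 0) :
    Θ.rank ≤ 2 * r ∧ nuclearNorm Θ ≤ Real.sqrt (2 * r) * frobNorm Θ := by
  have hrank : Θ.rank ≤ 2 * r := by
    simpa [two_mul] using rank_le_of_forall_trace_transpose_mul_eq_zero hU hV hΘ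
  refine ⟨hrank, (nuclearNorm_le_sqrt_rank_mul_frobNorm Θ).trans ?_⟩
  have hfrob : 0 ≤ frobNorm Θ := Real.sqrt_nonneg _
  gcongr
  exact_mod_cast hrank
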